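/- arXiv:2212.10874 — 6 statements merged into one kernel-verified Lean document; each statement's English description precedes it below -/
import Mathlib

section
/- Let p ∈ (1,∞). For all real numbers a, b, it holds that | |a - b|^p - |sgn(a)·|a|^p - sgn(b)·|b|^p| | ≤ (2^(p-1) - 1)·(|a|^p + |b|^p). -/
theorem lem1 {p : ℝ} (hp : 1 ≤ p) {x y : ℝ} (hx : 0 ≤ x) (hy : 0 ≤ y) :
    x ^ p + y ^ p ≤ (x + y) ^ p := by
  have h := NNReal.coe_le_coe.2 (NNReal.add_rpow_le_rpow_add x.toNNReal y.toNNReal hp)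
  simpa [NNReal.coe_rpow, Real.coe_toNNReal x hx, Real.coe_toNNReal y hy,
    Real.toNNReal_add hx hy] using h

theorem lem2 {p : ℝ} (hp : 1 ≤ p) {x y : ℝ} (hx : 0 ≤ x) (hy : 0 ≤ y) :
    (x + y) ^ p ≤ 2 ^ (p - 1) * (x ^ p + y ^ p) := by
  have h := NNReal.coe_le_coe.2 (NNReal.rpow_add_le_mul_rpow_add_rpow x.toNNReal y.toNNReal hp)
  simpa [NNReal.coe_rpow, Real.coe_toNNReal x hx, Real.coe_toNNReal y hy,
    Real.toNNReal_add hx hy] using h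

theorem key1aux {p : ℝ} (hp : 1 < p) {x y : ℝ} (hy : 0 ≤ y) (hxy : y ≤ x) :
    |(|x - y| ^ p - |x ^ p - y ^ p|)| ≤ (2 ^ (p - 1) - 1) * (x ^ p + y ^ p) := by
  have hx : 0 ≤ x := hy.trans hxy
  have hc : 0 ≤ x - y := sub_nonneg.2 hxy
  have hp0 : 0 ≤ p := by linarith
  rw [abs_of_nonneg hc, abs_of_nonneg (sub_nonneg.2 (Real.rpow_le_rpow hy hxy hp0))]
  have h1 : (x - y) ^ p + y ^ p ≤ x ^ p := by
    have := lem1 hp.le hc hy; rwa [sub_add_cancel] at this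
  have h2 : x ^ p ≤ 2 ^ (p - 1) * ((x - y) ^ p + y ^ p) := by
    have := lem2 hp.le hc hy; rwa [sub_add_cancel] at this
  have h3 : (x - y) ^ p ≤ x ^ p := Real.rpow_le_rpow hc (by linarith) hp0
  have h4 : (1 : ℝ) ≤ 2 ^ (p - 1) := Real.one_le_rpow one_le_two (by linarith)
  have h5 : 0 ≤ y ^ p := Real.rpow_nonneg hy p
  have h6 : 0 ≤ (x - y) ^ p := Real.rpow_nonneg hc p
  rw [abs_le]
  constructor <;> nlinarith

theorem key1 {p : ℝ} (hp : 1 < p) {x y : ℝ} (hx : 0 ≤ x) (hy : 0 ≤ y) :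
    |(|x - y| ^ p - |x ^ p - y ^ p|)| ≤ (2 ^ (p - 1) - 1) * (x ^ p + y ^ p) := by
  rcases le_total y x with h | h
  · exact key1aux hp hy h
  · rw [abs_sub_comm x y, abs_sub_comm (x ^ p), add_comm (x ^ p)]
    exact key1aux hp hx h

theorem key2 {p : ℝ} (hp : 1 < p) {x y : ℝ} (hx : 0 ≤ x) (hy : 0 ≤ y) :
    |((x + y) ^ p - (x ^ p + y ^ p))| ≤ (2 ^ (p - 1) - 1) * (x ^ p + y ^ p) := by
  have h1 := lem1 hp.le hx hy
  have h2 := lem2 hp.le hx hy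
  rw [abs_of_nonneg (by linarith)]
  nlinarith

theorem stmt_2 (p : ℝ) (hp : 1 < p) (a b : ℝ) :
    |(|a - b| ^ p - |Real.sign a * |a| ^ p - Real.sign b * |b| ^ p|)|
      ≤ (2 ^ (p - 1) - 1) * (|a| ^ p + |b| ^ p) := by
  have h4 : (1 : ℝ) ≤ 2 ^ (p - 1) := Real.one_le_rpow one_le_two (by linarith)
  have hp0 : p ≠ 0 := by linarith
  rcases lt_trichotomy a 0 with ha | ha | ha
  · rcases lt_trichotomy b 0 with hb | hb | hb
    · -- a < 0, b < 0
      rw [Real.sign_of_neg ha, Real.sign_of_neg hb, abs_of_neg ha, abs_of_neg hb]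
      have h := key1 hp (neg_nonneg.2 hb.le) (neg_nonneg.2 ha.le)
      have e1 : -b - -a = a - b := by ring
      rw [e1] at h
      have e2 : -1 * (-a) ^ p - -1 * (-b) ^ p = (-b) ^ p - (-a) ^ p := by ring
      rw [e2]
      calc |(|a - b| ^ p - |(-b) ^ p - (-a) ^ p|)|
          ≤ (2 ^ (p - 1) - 1) * ((-b) ^ p + (-a) ^ p) := h
        _ = (2 ^ (p - 1) - 1) * ((-a) ^ p + (-b) ^ p) := by ring
    · -- a < 0, b = 0
      subst hb
      simp only [Real.sign_zero, zero_mul, sub_zero, abs_zero, abs_neg]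
      rw [Real.sign_of_neg ha, abs_of_neg ha, Real.zero_rpow hp0]
      have : |-1 * (-a) ^ p| = (-a) ^ p := by
        rw [neg_one_mul, abs_neg, abs_of_nonneg (Real.rpow_nonneg (by linarith) p)]
      rw [this, sub_self, abs_zero]
      have : 0 ≤ (-a) ^ p := Real.rpow_nonneg (by linarith) p
      nlinarith
    · -- a < 0, b > 0
      rw [Real.sign_of_neg ha, Real.sign_of_pos hb, abs_of_neg ha, abs_of_pos hb]
      have h := key2 hp (neg_nonneg.2 ha.le) hb.le
      have e1 : |a - b| = -a + b := by rw [abs_of_neg (by linarith)]; ring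
      rw [e1]
      have e2 : |-1 * (-a) ^ p - 1 * b ^ p| = (-a) ^ p + b ^ p := by
        rw [neg_one_mul, one_mul, ← neg_add', abs_neg, abs_of_nonneg
          (add_nonneg (Real.rpow_nonneg (by linarith) p) (Real.rpow_nonneg hb.le p))]
      rw [e2]; exact h
  · -- a = 0
    subst ha
    rcases eq_or_ne b 0 with rfl | hb
    · simp [Real.zero_rpow hp0]
    · simp only [Real.sign_zero, zero_mul, zero_sub, abs_neg]
      have hs : |Real.sign b * |b| ^ p| = |b| ^ p := by
        rw [abs_mul, abs_of_nonneg (Real.rpow_nonneg (abs_nonneg b) p)]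
        rcases Real.sign_apply_eq_of_ne_zero b hb with h | h <;> rw [h] <;> norm_num
      rw [hs, sub_self, abs_zero]
      rw [Real.zero_rpow hp0]
      nlinarith [Real.rpow_nonneg (abs_nonneg b) p]
  · rcases lt_trichotomy b 0 with hb | hb | hb
    · -- a > 0, b < 0
      rw [Real.sign_of_pos ha, Real.sign_of_neg hb, abs_of_pos ha, abs_of_neg hb]
      have h := key2 hp ha.le (neg_nonneg.2 hb.le)
      have e1 : |a - b| = a + -b := by rw [abs_of_pos (by linarith)]; ring
      rw [e1]
      have e2 : |1 * a ^ p - -1 * (-b) ^ p| = a ^ p + (-b) ^ p := by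
        rw [neg_one_mul, one_mul, sub_neg_eq_add, abs_of_nonneg
          (add_nonneg (Real.rpow_nonneg ha.le p) (Real.rpow_nonneg (by linarith) p))]
      rw [e2]; exact h
    · -- a > 0, b = 0
      subst hb
      simp only [Real.sign_zero, zero_mul, sub_zero, abs_zero]
      rw [Real.sign_of_pos ha, abs_of_pos ha, Real.zero_rpow hp0]
      have : |1 * a ^ p| = a ^ p := by
        rw [one_mul, abs_of_nonneg (Real.rpow_nonneg ha.le p)]
      rw [this, sub_self, abs_zero]
      have : 0 ≤ a ^ p := Real.rpow_nonneg ha.le p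
      nlinarith
    · -- a > 0, b > 0
      rw [Real.sign_of_pos ha, Real.sign_of_pos hb, abs_of_pos ha, abs_of_pos hb,
        one_mul, one_mul]
      exact key1 hp ha.le hb.le
end

section
/- Let p ∈ [1,∞) and N ∈ ℕ, and let φ : ℝ^N → ℝ^N be the Mazur map φ(x)_i = sgn(x_i)·|x_i|^p. Then for all x, y in the closed unit ball of ℝ^N with respect to the ℓ^p-norm, | ‖x - y‖_p^p - ‖φ(x) - φ(y)‖_1 | ≤ 2^p - 2. -/
noncomputable def pnorm (p : ℝ) {N : ℕ} (x : Fin N → ℝ) : ℝ :=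
  (∑ i, |x i| ^ p) ^ (1 / p)

noncomputable def mazurMap (p : ℝ) {N : ℕ} (x : Fin N → ℝ) : Fin N → ℝ :=
  fun i => Real.sign (x i) * |x i| ^ p

lemma superadd {p : ℝ} (hp : 1 ≤ p) {a b : ℝ} (ha : 0 ≤ a) (hb : 0 ≤ b) :
    a ^ p + b ^ p ≤ (a + b) ^ p := by
  lift a to NNReal using ha
  lift b to NNReal using hb
  have := NNReal.add_rpow_le_rpow_add a b hp
  exact_mod_cast this

lemma convb {p : ℝ} (hp : 1 ≤ p) {a b : ℝ} (ha : 0 ≤ a) (hb : 0 ≤ b) :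
    (a + b) ^ p ≤ 2 ^ (p - 1) * (a ^ p + b ^ p) := by
  lift a to NNReal using ha
  lift b to NNReal using hb
  have := NNReal.rpow_add_le_mul_rpow_add_rpow a b hp
  exact_mod_cast this

-- key pointwise estimate for nonneg pair, ordered
lemma key_nonneg {p : ℝ} (hp : 1 ≤ p) {a b : ℝ} (hb : 0 ≤ b) (hab : b ≤ a) :
    |(a - b) ^ p - (a ^ p - b ^ p)| ≤ (2 ^ (p - 1) - 1) * (a ^ p + b ^ p) := by
  have ha : 0 ≤ a := hb.trans hab
  have h1 : (a - b) ^ p + b ^ p ≤ a ^ p := by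
    have := superadd hp (sub_nonneg.2 hab) hb
    simpa [sub_add_cancel] using this
  have h2 : a ^ p ≤ 2 ^ (p - 1) * ((a - b) ^ p + b ^ p) := by
    have := convb hp (sub_nonneg.2 hab) hb
    simpa [sub_add_cancel] using this
  have hsubp : (a - b) ^ p ≤ a ^ p :=
    Real.rpow_le_rpow (sub_nonneg.2 hab) (by linarith) (by linarith)
  have h2p1 : (1 : ℝ) ≤ 2 ^ (p - 1) := by
    have := Real.rpow_le_rpow_of_exponent_le (x := 2) (by norm_num) (by linarith : (0:ℝ) ≤ p - 1)
    simpa using this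
  rw [abs_sub_comm, abs_of_nonneg (by linarith)]
  nlinarith [Real.rpow_nonneg hb p, Real.rpow_nonneg ha p,
    Real.rpow_nonneg (sub_nonneg.2 hab) p]

-- mixed signs: a, c ≥ 0, compare (a+c)^p with a^p + c^p
lemma key_mixed {p : ℝ} (hp : 1 ≤ p) {a c : ℝ} (ha : 0 ≤ a) (hc : 0 ≤ c) :
    |(a + c) ^ p - (a ^ p + c ^ p)| ≤ (2 ^ (p - 1) - 1) * (a ^ p + c ^ p) := by
  have h1 := superadd hp ha hc
  have h2 := convb hp ha hc
  rw [abs_of_nonneg (by linarith)]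
  linarith

lemma phi_nonneg {p : ℝ} (hp : 1 ≤ p) {a : ℝ} (ha : 0 ≤ a) :
    Real.sign a * |a| ^ p = a ^ p := by
  rcases eq_or_lt_of_le ha with h | h
  · simp [← h, Real.sign_zero, Real.zero_rpow (by positivity : p ≠ 0)]
  · rw [Real.sign_of_pos h, abs_of_pos h, one_mul]

lemma phi_neg {p : ℝ} (hp : 1 ≤ p) {a : ℝ} (ha : a ≤ 0) :
    Real.sign a * |a| ^ p = -((-a) ^ p) := by
  rcases eq_or_lt_of_le ha with h | h
  · simp [h, Real.sign_zero, Real.zero_rpow (by positivity : p ≠ 0)]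
  · rw [Real.sign_of_neg h, abs_of_neg h, neg_one_mul]

lemma key_nn {p : ℝ} (hp : 1 ≤ p) {a b : ℝ} (ha : 0 ≤ a) (hb : 0 ≤ b) :
    abs (|a - b| ^ p - |a ^ p - b ^ p|) ≤ (2 ^ (p - 1) - 1) * (a ^ p + b ^ p) := by
  rcases le_total b a with h | h
  · rw [abs_of_nonneg (sub_nonneg.2 h),
      abs_of_nonneg (sub_nonneg.2 (Real.rpow_le_rpow hb h (by linarith)))]
    exact key_nonneg hp hb h
  · rw [abs_sub_comm a b, abs_sub_comm (a ^ p),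
      abs_of_nonneg (sub_nonneg.2 h),
      abs_of_nonneg (sub_nonneg.2 (Real.rpow_le_rpow ha h (by linarith))), add_comm (a ^ p)]
    exact key_nonneg hp ha h

lemma key_aux {p : ℝ} (hp : 1 ≤ p) {a : ℝ} (b : ℝ) (ha : 0 ≤ a) :
    abs (|a - b| ^ p - |Real.sign a * |a| ^ p - Real.sign b * |b| ^ p|) ≤
      (2 ^ (p - 1) - 1) * (|a| ^ p + |b| ^ p) := by
  rcases le_total 0 b with hb | hb
  · rw [phi_nonneg hp ha, phi_nonneg hp hb, abs_of_nonneg ha, abs_of_nonneg hb]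
    exact key_nn hp ha hb
  · rw [phi_nonneg hp ha, phi_neg hp hb, abs_of_nonneg ha, abs_of_nonpos hb]
    have h1 : a - b = a + -b := by ring
    have h2 : a ^ p - -((-b) ^ p) = a ^ p + (-b) ^ p := by ring
    rw [h1, h2, abs_of_nonneg (by linarith [neg_nonneg.2 hb] : (0:ℝ) ≤ a + -b),
      abs_of_nonneg (add_nonneg (Real.rpow_nonneg ha p)
        (Real.rpow_nonneg (neg_nonneg.2 hb) p))]
    exact key_mixed hp ha (neg_nonneg.2 hb)

lemma key (p : ℝ) (hp : 1 ≤ p) (a b : ℝ) :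
    abs (|a - b| ^ p - |Real.sign a * |a| ^ p - Real.sign b * |b| ^ p|) ≤
      (2 ^ (p - 1) - 1) * (|a| ^ p + |b| ^ p) := by
  rcases le_total 0 a with ha | ha
  · exact key_aux hp b ha
  · have h := key_aux hp (-b) (neg_nonneg.2 ha)
    simp only [Real.sign_neg, abs_neg, neg_mul, neg_sub_neg] at h
    rw [abs_sub_comm b a, abs_sub_comm (Real.sign b * |b| ^ p)] at h
    linarith [h]

theorem stmt_3 (p : ℝ) (hp : 1 ≤ p) (N : ℕ) (x y : Fin N → ℝ)
    (hx : pnorm p x ≤ 1) (hy : pnorm p y ≤ 1) :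
    |pnorm p (x - y) ^ p - pnorm 1 (mazurMap p x - mazurMap p y)| ≤ 2 ^ p - 2 := by
  have hp0 : p ≠ 0 := by positivity
  have hpow : ∀ z : Fin N → ℝ, pnorm p z ^ p = ∑ i, |z i| ^ p := by
    intro z
    have hS : (0:ℝ) ≤ ∑ i, |z i| ^ p :=
      Finset.sum_nonneg fun i _ => Real.rpow_nonneg (abs_nonneg _) _
    rw [pnorm, ← Real.rpow_mul hS, one_div, inv_mul_cancel₀ hp0, Real.rpow_one]
  have hsum : ∀ z : Fin N → ℝ, pnorm p z ≤ 1 → ∑ i, |z i| ^ p ≤ 1 := by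
    intro z hz
    have h := Real.rpow_le_one (Real.rpow_nonneg
      (Finset.sum_nonneg fun i _ => Real.rpow_nonneg (abs_nonneg _) _) _)
      hz (by linarith : (0:ℝ) ≤ p)
    calc ∑ i, |z i| ^ p = pnorm p z ^ p := (hpow z).symm
    _ ≤ 1 := by simpa [pnorm, one_div] using h
  have h1 : pnorm 1 (mazurMap p x - mazurMap p y)
      = ∑ i, |Real.sign (x i) * |x i| ^ p - Real.sign (y i) * |y i| ^ p| := by
    simp [pnorm, mazurMap, Real.rpow_one]
  rw [hpow, h1]
  have hxy : ∀ i : Fin N, |(x - y) i| = |x i - y i| := fun i => rfl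
  have hsum2 : ∑ i, |(x - y) i| ^ p = ∑ i, |x i - y i| ^ p := by
    simp [hxy]
  rw [hsum2, ← Finset.sum_sub_distrib]
  have h2p1 : (1 : ℝ) ≤ 2 ^ (p - 1) := by
    have := Real.rpow_le_rpow_of_exponent_le (x := 2) (by norm_num) (by linarith : (0:ℝ) ≤ p - 1)
    simpa using this
  have hterm := fun i : Fin N => key p hp (x i) (y i)
  calc |∑ i, (|x i - y i| ^ p - |Real.sign (x i) * |x i| ^ p - Real.sign (y i) * |y i| ^ p|)|
      ≤ ∑ i, abs (|x i - y i| ^ p - |Real.sign (x i) * |x i| ^ p - Real.sign (y i) * |y i| ^ p|) :=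
        Finset.abs_sum_le_sum_abs _ _
    _ ≤ ∑ i, (2 ^ (p - 1) - 1) * (|x i| ^ p + |y i| ^ p) :=
        Finset.sum_le_sum fun i _ => hterm i
    _ = (2 ^ (p - 1) - 1) * (∑ i, |x i| ^ p + ∑ i, |y i| ^ p) := by
        rw [← Finset.sum_add_distrib, Finset.mul_sum]
    _ ≤ (2 ^ (p - 1) - 1) * 2 := by
        apply mul_le_mul_of_nonneg_left _ (by linarith)
        linarith [hsum x hx, hsum y hy]
    _ = 2 ^ p - 2 := by
        have : (2:ℝ) ^ p = 2 ^ (p - 1) * 2 := by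
          rw [show p = (p - 1) + 1 by ring, Real.rpow_add (by norm_num : (0:ℝ) < 2)]
          simp
        rw [this]; ring
end

section
/- Let p ∈ (1,2) and N ∈ ℕ. For every n ∈ ℕ and every x₁, …, xₙ in the closed unit ball of (ℝ^N, ‖·‖_p), there exist signs α₁, …, αₙ ∈ {−1, 1} such that ‖Σᵢ αᵢ xᵢ‖_p ≤ n^(1/p). -/
/-!
For `p ≤ 2`, the scalar Clarkson inequality `|a + b|^p + |a - b|^p ≤ 2 (|a|^p + |b|^p)`, summed over
coordinates, shows that `‖S + y‖_p^p` or `‖S - y‖_p^p` is at most `‖S‖_p^p + ‖y‖_p^p`. Choosing the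
signs one vector at a time therefore gives `‖∑ αᵢ xᵢ‖_p^p ≤ ∑ ‖xᵢ‖_p^p ≤ n`.
-/

open Finset

lemma abs_rpow_eq_sq_rpow_half {p : ℝ} (a : ℝ) : |a| ^ p = (a ^ 2) ^ (p / 2) := by
  rw [← sq_abs, ← Real.rpow_natCast, ← Real.rpow_mul (abs_nonneg a)]
  congr 1
  ring

lemma abs_add_rpow_add_abs_sub_rpow_le {p : ℝ} (hp0 : 0 ≤ p) (hp2 : p ≤ 2) (a b : ℝ) :
    |a + b| ^ p + |a - b| ^ p ≤ 2 * (|a| ^ p + |b| ^ p) := by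
  have hs0 : 0 ≤ p / 2 := by positivity
  have hs1 : p / 2 ≤ 1 := by linarith
  simp only [abs_rpow_eq_sq_rpow_half (p := p)]
  -- `t ↦ t ^ (p/2)` is concave and subadditive, and `(a+b)² + (a-b)² = 2(a² + b²)`.
  have hconcave := (Real.concaveOn_rpow hs0 hs1).2 (Set.mem_Ici.2 (sq_nonneg (a + b)))
    (Set.mem_Ici.2 (sq_nonneg (a - b))) (by norm_num : (0 : ℝ) ≤ 1 / 2)
    (by norm_num : (0 : ℝ) ≤ 1 / 2) (by norm_num)
  have hmid : (1 / 2 : ℝ) • (a + b) ^ 2 + (1 / 2 : ℝ) • (a - b) ^ 2 = a ^ 2 + b ^ 2 := by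
    simp only [smul_eq_mul]; ring
  rw [hmid, smul_eq_mul, smul_eq_mul] at hconcave
  have hsub := Real.rpow_add_le_add_rpow (sq_nonneg a) (sq_nonneg b) hs0 hs1
  linarith

lemma sum_abs_add_rpow_add_sum_abs_sub_rpow_le {ι : Type*} [Fintype ι] {p : ℝ} (hp0 : 0 ≤ p)
    (hp2 : p ≤ 2) (x y : ι → ℝ) :
    ∑ j, |x j + y j| ^ p + ∑ j, |x j - y j| ^ p ≤ 2 * (∑ j, |x j| ^ p + ∑ j, |y j| ^ p) := by
  rw [← sum_add_distrib, ← sum_add_distrib, mul_sum]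
  exact sum_le_sum fun j _ ↦ abs_add_rpow_add_abs_sub_rpow_le hp0 hp2 (x j) (y j)

lemma exists_sign_sum_abs_add_mul_rpow_le {ι : Type*} [Fintype ι] {p : ℝ} (hp0 : 0 ≤ p)
    (hp2 : p ≤ 2) (x y : ι → ℝ) :
    ∃ ε : ℝ, (ε = 1 ∨ ε = -1) ∧
      ∑ j, |x j + ε * y j| ^ p ≤ ∑ j, |x j| ^ p + ∑ j, |y j| ^ p := by
  have h := sum_abs_add_rpow_add_sum_abs_sub_rpow_le hp0 hp2 x y
  by_cases hplus : ∑ j, |x j + y j| ^ p ≤ ∑ j, |x j| ^ p + ∑ j, |y j| ^ p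
  · exact ⟨1, .inl rfl, by simpa using hplus⟩
  · refine ⟨-1, .inr rfl, ?_⟩
    simp only [neg_one_mul, ← sub_eq_add_neg]
    linarith

lemma exists_signs_sum_abs_sum_smul_rpow_le {ι κ : Type*} [Fintype κ] {p : ℝ} (hp0 : 0 < p)
    (hp2 : p ≤ 2) (x : ι → κ → ℝ) (s : Finset ι) :
    ∃ α : ι → ℝ, (∀ i, α i = 1 ∨ α i = -1) ∧
      ∑ j, |(∑ i ∈ s, α i • x i) j| ^ p ≤ ∑ i ∈ s, ∑ j, |x i j| ^ p := by
  classical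
  induction s using Finset.induction_on with
  | empty =>
    refine ⟨fun _ ↦ 1, fun _ ↦ .inl rfl, ?_⟩
    simp [Real.zero_rpow hp0.ne']
  | insert a s ha ih =>
    obtain ⟨α, hα, hs⟩ := ih
    obtain ⟨ε, hε, hstep⟩ :=
      exists_sign_sum_abs_add_mul_rpow_le hp0.le hp2 (∑ i ∈ s, α i • x i) (x a)
    refine ⟨Function.update α a ε, fun i ↦ ?_, ?_⟩
    · rcases eq_or_ne i a with rfl | hi
      · simpa using hε
      · simpa [hi] using hα i
    · have hsum : ∑ i ∈ insert a s, Function.update α a ε i • x i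
          = ∑ i ∈ s, α i • x i + ε • x a := by
        rw [sum_insert ha, Function.update_self, add_comm]
        congr 1
        exact sum_congr rfl fun i hi ↦ by rw [Function.update_of_ne (ne_of_mem_of_not_mem hi ha)]
      rw [hsum, sum_insert ha]
      simp only [Pi.add_apply, Pi.smul_apply, smul_eq_mul] at hstep ⊢
      linarith

lemma pnorm_le_rpow_one_div_iff {p : ℝ} (hp : 0 < p) {N : ℕ} (x : Fin N → ℝ) {c : ℝ}
    (hc : 0 ≤ c) : pnorm p x ≤ c ^ (1 / p) ↔ ∑ i, |x i| ^ p ≤ c :=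
  Real.rpow_le_rpow_iff (sum_nonneg fun i _ ↦ by positivity) hc (by positivity)

lemma pnorm_le_one_iff {p : ℝ} (hp : 0 < p) {N : ℕ} (x : Fin N → ℝ) :
    pnorm p x ≤ 1 ↔ ∑ i, |x i| ^ p ≤ 1 := by
  simpa using pnorm_le_rpow_one_div_iff hp x zero_le_one

theorem stmt_9 (p : ℝ) (hp : 1 < p) (hp2 : p < 2) (N : ℕ) (n : ℕ)
    (x : Fin n → Fin N → ℝ) (hx : ∀ i, pnorm p (x i) ≤ 1) :
    ∃ α : Fin n → ℝ, (∀ i, α i = 1 ∨ α i = -1) ∧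
      pnorm p (∑ i, α i • x i) ≤ (n : ℝ) ^ (1 / p) := by
  have hp0 : 0 < p := zero_lt_one.trans hp
  obtain ⟨α, hα, hsum⟩ := exists_signs_sum_abs_sum_smul_rpow_le hp0 hp2.le x univ
  refine ⟨α, hα, (pnorm_le_rpow_one_div_iff hp0 _ n.cast_nonneg).2 ?_⟩
  calc ∑ j, |(∑ i, α i • x i) j| ^ p ≤ ∑ i, ∑ j, |x i j| ^ p := hsum
    _ ≤ ∑ _i : Fin n, (1 : ℝ) := sum_le_sum fun i _ ↦ (pnorm_le_one_iff hp0 (x i)).1 (hx i)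
    _ = n := by simp
end

section
/- Let V and W be real normed vector spaces and let φ : B → W be an isometric map defined on the closed unit ball B of V which is affine (i.e., φ(tx + (1−t)y) = tφ(x) + (1−t)φ(y) for all x, y ∈ B and t ∈ [0,1]). Then there exists a unique linear isometric map Φ : V → W such that φ(x) = Φ(x) + φ(0) for all x ∈ B. -/
theorem stmt_10 (V W : Type*) [NormedAddCommGroup V] [NormedSpace ℝ V]
    [NormedAddCommGroup W] [NormedSpace ℝ W] (φ : V → W)
    (haff : ∀ x ∈ Metric.closedBall (0 : V) 1, ∀ y ∈ Metric.closedBall (0 : V) 1,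
      ∀ t ∈ Set.Icc (0:ℝ) 1, φ (t • x + (1 - t) • y) = t • φ x + (1 - t) • φ y)
    (hiso : ∀ x ∈ Metric.closedBall (0 : V) 1, ∀ y ∈ Metric.closedBall (0 : V) 1,
      ‖φ x - φ y‖ = ‖x - y‖) :
    ∃! Φ : V →ₗᵢ[ℝ] W, ∀ x ∈ Metric.closedBall (0 : V) 1, φ x = Φ x + φ 0 := by
  set ψ : V → W := fun x => φ x - φ 0 with hψ
  have h0B : (0 : V) ∈ Metric.closedBall (0 : V) 1 := by simp
  have hψ0 : ψ 0 = 0 := sub_self _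
  -- homogeneity on the ball
  have hhom : ∀ x ∈ Metric.closedBall (0 : V) 1, ∀ t ∈ Set.Icc (0:ℝ) 1,
      ψ (t • x) = t • ψ x := by
    intro x hx t ht
    have h := haff x hx 0 h0B t ht
    rw [show t • x + (1 - t) • (0 : V) = t • x by simp] at h
    simp only [hψ]
    linear_combination (norm := module) h
  -- oddness on the ball
  have hodd : ∀ x ∈ Metric.closedBall (0 : V) 1, ψ (-x) = - ψ x := by
    intro x hx
    have hx' : -x ∈ Metric.closedBall (0 : V) 1 := by simpa using hx
    have h := haff x hx (-x) hx' (1/2) (by norm_num)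
    rw [show (1/2 : ℝ) • x + (1 - 1/2 : ℝ) • (-x) = 0 by module] at h
    simp only [hψ]
    linear_combination (norm := module) (-2:ℝ) • h
  -- midpoint property on the ball
  have hmid : ∀ x ∈ Metric.closedBall (0 : V) 1, ∀ y ∈ Metric.closedBall (0 : V) 1,
      ψ ((1/2 : ℝ) • (x + y)) = (1/2 : ℝ) • ψ x + (1/2 : ℝ) • ψ y := by
    intro x hx y hy
    have h := haff x hx y hy (1/2) (by norm_num)
    rw [show (1/2 : ℝ) • x + (1 - 1/2 : ℝ) • y = (1/2 : ℝ) • (x + y) by module] at h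
    simp only [hψ]
    linear_combination (norm := module) h
  set Φ₀ : V → W := fun x => ‖x‖ • ψ (‖x‖⁻¹ • x) with hΦ₀
  have hΦ₀0 : Φ₀ 0 = 0 := by simp [hΦ₀, hψ0]
  have memB : ∀ (x : V) (r : ℝ), 0 < r → ‖x‖ ≤ r →
      r⁻¹ • x ∈ Metric.closedBall (0 : V) 1 := by
    intro x r hr hxr
    simp only [Metric.mem_closedBall, dist_zero_right, norm_smul, norm_inv,
      Real.norm_eq_abs, abs_of_pos hr]
    rw [inv_mul_le_iff₀ hr]
    linarith
  -- scale-invariance of the definition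
  have hscale : ∀ (x : V) (r : ℝ), 0 < r → ‖x‖ ≤ r → Φ₀ x = r • ψ (r⁻¹ • x) := by
    intro x r hr hxr
    rcases eq_or_ne x 0 with rfl | hx0
    · simp [hΦ₀0, hψ0]
    · have hn : (0:ℝ) < ‖x‖ := norm_pos_iff.mpr hx0
      have hu : ‖x‖⁻¹ • x ∈ Metric.closedBall (0 : V) 1 := memB x ‖x‖ hn le_rfl
      have ht : ‖x‖ / r ∈ Set.Icc (0:ℝ) 1 := by
        constructor
        · positivity
        · rw [div_le_one hr]; exact hxr
      have key : r⁻¹ • x = (‖x‖ / r) • (‖x‖⁻¹ • x) := by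
        rw [smul_smul]
        congr 1
        rw [div_mul_eq_mul_div, mul_inv_cancel₀ hn.ne', one_div]
      rw [key, hhom _ hu _ ht, smul_smul]
      show ‖x‖ • ψ (‖x‖⁻¹ • x) = (r * (‖x‖ / r)) • ψ (‖x‖⁻¹ • x)
      rw [mul_div_cancel₀ _ hr.ne']
  have hadd : ∀ x y : V, Φ₀ (x + y) = Φ₀ x + Φ₀ y := by
    intro x y
    set r : ℝ := ‖x‖ + ‖y‖ + 1 with hr
    have hrpos : 0 < r := by positivity
    have hxr : ‖x‖ ≤ r := by
      have := norm_nonneg y; simp only [hr]; linarith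
    have hyr : ‖y‖ ≤ r := by
      have := norm_nonneg x; simp only [hr]; linarith
    have hxy : ‖x + y‖ ≤ 2 * r := by
      calc ‖x + y‖ ≤ ‖x‖ + ‖y‖ := norm_add_le _ _
        _ ≤ 2 * r := by nlinarith [norm_nonneg x, norm_nonneg y]
    have h2r : (0:ℝ) < 2 * r := by positivity
    rw [hscale (x + y) (2 * r) h2r hxy, hscale x r hrpos hxr, hscale y r hrpos hyr]
    have key : (2 * r)⁻¹ • (x + y) = (1/2 : ℝ) • (r⁻¹ • x + r⁻¹ • y) := by
      rw [show ((2:ℝ) * r)⁻¹ = (1/2) * r⁻¹ by rw [mul_inv]; norm_num]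
      module
    rw [key, hmid _ (memB x r hrpos hxr) _ (memB y r hrpos hyr), smul_add,
      smul_smul, smul_smul, show 2 * r * (1/2 : ℝ) = r by ring]
  have hneg : ∀ x : V, Φ₀ (-x) = - Φ₀ x := by
    intro x
    rcases eq_or_ne x 0 with rfl | hx0
    · simp [hΦ₀0]
    · have hn : (0:ℝ) < ‖x‖ := norm_pos_iff.mpr hx0
      have hu : ‖x‖⁻¹ • x ∈ Metric.closedBall (0 : V) 1 := memB x ‖x‖ hn le_rfl
      simp only [hΦ₀, norm_neg, smul_neg]
      rw [hodd _ hu, smul_neg]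
  have hsmul : ∀ (c : ℝ) (x : V), Φ₀ (c • x) = c • Φ₀ x := by
    have hpos : ∀ (c : ℝ), 0 < c → ∀ (x : V), Φ₀ (c • x) = c • Φ₀ x := by
      intro c hc x
      set s : ℝ := ‖x‖ + 1 with hs
      have hspos : 0 < s := by positivity
      have hxs : ‖x‖ ≤ s := by simp [hs]
      have hcs : (0:ℝ) < c * s := by positivity
      have hcx : ‖c • x‖ ≤ c * s := by
        rw [norm_smul, Real.norm_eq_abs, abs_of_pos hc]
        exact mul_le_mul_of_nonneg_left hxs hc.le
      rw [hscale (c • x) (c * s) hcs hcx, hscale x s hspos hxs, smul_smul, smul_smul,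
        show ((c * s)⁻¹ * c) = s⁻¹ by
          rw [mul_comm c s, mul_inv, mul_assoc, inv_mul_cancel₀ hc.ne', mul_one],
        mul_comm c s]
    intro c x
    rcases lt_trichotomy c 0 with hc | rfl | hc
    · have h1 : c • x = -((-c) • x) := by module
      rw [h1, hneg, hpos (-c) (by linarith) x]
      module
    · simp [hΦ₀0]
    · exact hpos c hc x
  have hnorm : ∀ x : V, ‖Φ₀ x‖ = ‖x‖ := by
    intro x
    rcases eq_or_ne x 0 with rfl | hx0
    · simp [hΦ₀0]
    · have hn : (0:ℝ) < ‖x‖ := norm_pos_iff.mpr hx0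
      have hu : ‖x‖⁻¹ • x ∈ Metric.closedBall (0 : V) 1 := memB x ‖x‖ hn le_rfl
      have h1 : ‖ψ (‖x‖⁻¹ • x)‖ = 1 := by
        have h := hiso _ hu 0 h0B
        simp only [hψ]
        rw [h, sub_zero, norm_smul, norm_inv, Real.norm_eq_abs,
          abs_of_pos hn, inv_mul_cancel₀ hn.ne']
      show ‖‖x‖ • ψ (‖x‖⁻¹ • x)‖ = ‖x‖
      rw [norm_smul, Real.norm_eq_abs, abs_of_pos hn, h1, mul_one]
  set Φ : V →ₗᵢ[ℝ] W :=
    ⟨{ toFun := Φ₀, map_add' := hadd, map_smul' := hsmul }, hnorm⟩ with hΦ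
  have hΦball : ∀ x ∈ Metric.closedBall (0 : V) 1, φ x = Φ x + φ 0 := by
    intro x hx
    have hx1 : ‖x‖ ≤ 1 := by simpa using hx
    have h2 : Φ₀ x = ψ x := by
      rw [hscale x 1 one_pos hx1]
      simp
    show φ x = Φ₀ x + φ 0
    rw [h2]
    simp only [hψ]
    abel
  refine ⟨Φ, hΦball, ?_⟩
  intro Φ' hΦ'
  ext x
  set r : ℝ := ‖x‖ + 1 with hr
  have hrpos : 0 < r := by positivity
  have hxr : ‖x‖ ≤ r := by simp [hr]
  have hu := memB x r hrpos hxr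
  have h1 : Φ' (r⁻¹ • x) = Φ (r⁻¹ • x) :=
    add_right_cancel ((hΦ' _ hu).symm.trans (hΦball _ hu))
  have h2 : Φ' x = r • Φ' (r⁻¹ • x) := by
    rw [← Φ'.map_smul, smul_smul, mul_inv_cancel₀ hrpos.ne', one_smul]
  have h3 : Φ x = r • Φ (r⁻¹ • x) := by
    rw [← Φ.map_smul, smul_smul, mul_inv_cancel₀ hrpos.ne', one_smul]
  rw [h2, h3, h1]
end

section
/- Let V be a real normed space, ψ : B → V an affine isometric map on the closed unit ball B of a real normed space U with ψ(0) = 0. Then the map Φ : U → V defined by Φ(x) = ‖x‖ · ψ(x/‖x‖) for x ≠ 0 and Φ(0) = 0 is a linear isometry extending ψ. -/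
open Classical in
theorem stmt_11 (U V : Type*) [NormedAddCommGroup U] [NormedSpace ℝ U]
    [NormedAddCommGroup V] [NormedSpace ℝ V] (ψ : U → V)
    (haff : ∀ x ∈ Metric.closedBall (0 : U) 1, ∀ y ∈ Metric.closedBall (0 : U) 1,
      ∀ t ∈ Set.Icc (0:ℝ) 1, ψ (t • x + (1 - t) • y) = t • ψ x + (1 - t) • ψ y)
    (hiso : ∀ x ∈ Metric.closedBall (0 : U) 1, ∀ y ∈ Metric.closedBall (0 : U) 1,
      ‖ψ x - ψ y‖ = ‖x - y‖)
    (hzero : ψ 0 = 0)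
    (Φ : U → V) (hΦ : ∀ x : U, Φ x = if x = 0 then 0 else ‖x‖ • ψ (‖x‖⁻¹ • x)) :
    (∀ x y : U, Φ (x + y) = Φ x + Φ y) ∧ (∀ (c : ℝ) (x : U), Φ (c • x) = c • Φ x) ∧
      (∀ x : U, ‖Φ x‖ = ‖x‖) ∧ ∀ x ∈ Metric.closedBall (0 : U) 1, Φ x = ψ x := by
  have hball : ∀ x : U, ‖x‖ ≤ 1 → x ∈ Metric.closedBall (0 : U) 1 := by
    intro x hx; simpa [Metric.mem_closedBall, dist_zero_right] using hx
  have hballn : ∀ x : U, x ∈ Metric.closedBall (0 : U) 1 → ‖x‖ ≤ 1 := by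
    intro x hx; simpa [Metric.mem_closedBall, dist_zero_right] using hx
  have h0mem : (0 : U) ∈ Metric.closedBall (0 : U) 1 := hball 0 (by simp)
  have hmem : ∀ x : U, x ≠ 0 → (‖x‖⁻¹ • x) ∈ Metric.closedBall (0 : U) 1 := by
    intro x hx
    apply hball
    rw [norm_smul, norm_inv, norm_norm, inv_mul_cancel₀ (norm_ne_zero_iff.2 hx)]
  -- positive-scalar homogeneity of ψ on the ball
  have hsmul : ∀ t ∈ Set.Icc (0:ℝ) 1, ∀ x ∈ Metric.closedBall (0 : U) 1,
      ψ (t • x) = t • ψ x := by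
    intro t ht x hx
    have := haff x hx 0 h0mem t ht
    simpa [hzero] using this
  -- negation
  have hneg : ∀ x ∈ Metric.closedBall (0 : U) 1, ψ (-x) = -ψ x := by
    intro x hx
    have hx' : (-x) ∈ Metric.closedBall (0 : U) 1 := by
      apply hball; rw [norm_neg]; exact hballn x hx
    have := haff x hx (-x) hx' (1/2) (by norm_num)
    have h2 : (1/2 : ℝ) • x + (1 - 1/2 : ℝ) • (-x) = 0 := by module
    rw [h2, hzero] at this
    have : (1/2 : ℝ) • ψ (-x) = -((1/2 : ℝ) • ψ x) := by
      norm_num at this ⊢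
      linear_combination (norm := module) -this
    have := congrArg (fun v => (2:ℝ) • v) this
    simpa [smul_smul, smul_neg] using this
  -- extension property
  have hext : ∀ x ∈ Metric.closedBall (0 : U) 1, Φ x = ψ x := by
    intro x hx
    by_cases hx0 : x = 0
    · simp [hΦ, hx0, hzero]
    · rw [hΦ, if_neg hx0]
      have ht : ‖x‖ ∈ Set.Icc (0:ℝ) 1 := ⟨norm_nonneg x, hballn x hx⟩
      have := hsmul ‖x‖ ht (‖x‖⁻¹ • x) (hmem x hx0)
      rw [smul_smul, mul_inv_cancel₀ (norm_ne_zero_iff.2 hx0), one_smul] at this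
      exact this.symm
  -- homogeneity of Φ
  have hhom : ∀ (c : ℝ) (x : U), Φ (c • x) = c • Φ x := by
    intro c x
    by_cases hx0 : x = 0
    · simp [hΦ, hx0]
    by_cases hc0 : c = 0
    · simp [hΦ, hc0, hx0]
    have hcx : c • x ≠ 0 := smul_ne_zero hc0 hx0
    have hnx : ‖x‖ ≠ 0 := norm_ne_zero_iff.2 hx0
    rw [hΦ, if_neg hcx, hΦ, if_neg hx0, norm_smul, Real.norm_eq_abs]
    rcases lt_or_gt_of_ne hc0 with hneg' | hpos
    · have habs : |c| = -c := abs_of_neg hneg'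
      have hdir : (|c| * ‖x‖)⁻¹ • (c • x) = -(‖x‖⁻¹ • x) := by
        rw [habs, smul_smul, mul_inv]
        rw [show (-c)⁻¹ * ‖x‖⁻¹ * c = -(‖x‖⁻¹) by field_simp]
        module
      rw [hdir, hneg _ (hmem x hx0), habs]
      module
    · have habs : |c| = c := abs_of_pos hpos
      have hdir : (|c| * ‖x‖)⁻¹ • (c • x) = ‖x‖⁻¹ • x := by
        rw [habs, smul_smul, mul_inv]
        rw [show c⁻¹ * ‖x‖⁻¹ * c = ‖x‖⁻¹ by field_simp]
      rw [hdir, habs, smul_smul]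
  -- additivity
  have hadd : ∀ x y : U, Φ (x + y) = Φ x + Φ y := by
    intro x y
    set r : ℝ := max ‖x‖ ‖y‖ + 1 with hr
    have hrpos : 0 < r := by positivity
    have hrne : r ≠ 0 := ne_of_gt hrpos
    set a : U := r⁻¹ • x with ha
    set b : U := r⁻¹ • y with hb
    clear_value a b
    have hna : ‖a‖ ≤ 1 := by
      rw [ha, norm_smul, norm_inv, Real.norm_eq_abs, abs_of_pos hrpos]
      rw [inv_mul_le_iff₀ hrpos, mul_one]
      calc ‖x‖ ≤ max ‖x‖ ‖y‖ := le_max_left _ _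
        _ ≤ r := by rw [hr]; linarith
    have hnb : ‖b‖ ≤ 1 := by
      rw [hb, norm_smul, norm_inv, Real.norm_eq_abs, abs_of_pos hrpos]
      rw [inv_mul_le_iff₀ hrpos, mul_one]
      calc ‖y‖ ≤ max ‖x‖ ‖y‖ := le_max_right _ _
        _ ≤ r := by rw [hr]; linarith
    have hma : a ∈ Metric.closedBall (0 : U) 1 := hball a hna
    have hmb : b ∈ Metric.closedBall (0 : U) 1 := hball b hnb
    have hmid : (1/2 : ℝ) • a + (1 - 1/2 : ℝ) • b ∈ Metric.closedBall (0 : U) 1 := by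
      apply hball
      have htr := norm_add_le ((1/2 : ℝ) • a) ((1 - 1/2 : ℝ) • b)
      rw [norm_smul, norm_smul, Real.norm_eq_abs, Real.norm_eq_abs] at htr
      have ha2 : |(1/2 : ℝ)| = 1/2 := by norm_num
      have hb2 : |(1 - 1/2 : ℝ)| = 1/2 := by norm_num
      rw [ha2, hb2] at htr
      linarith
    have hxa : x = r • a := by rw [ha, smul_smul, mul_inv_cancel₀ hrne, one_smul]
    have hyb : y = r • b := by rw [hb, smul_smul, mul_inv_cancel₀ hrne, one_smul]
    have key : x + y = (2 * r) • ((1/2 : ℝ) • a + (1 - 1/2 : ℝ) • b) := by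
      rw [hxa, hyb]; module
    have hΦx : Φ x = r • ψ a := by rw [hxa, hhom, hext _ hma]
    have hΦy : Φ y = r • ψ b := by rw [hyb, hhom, hext _ hmb]
    rw [key, hhom, hext _ hmid, haff a hma b hmb (1/2) (by norm_num), hΦx, hΦy]
    module
  refine ⟨hadd, hhom, ?_, hext⟩
  intro x
  by_cases hx0 : x = 0
  · simp [hΦ, hx0]
  · rw [hΦ, if_neg hx0, norm_smul, norm_norm]
    have h1 : ‖ψ (‖x‖⁻¹ • x)‖ = 1 := by
      have := hiso _ (hmem x hx0) 0 h0mem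
      rw [hzero, sub_zero, sub_zero, norm_smul, norm_inv, norm_norm,
        inv_mul_cancel₀ (norm_ne_zero_iff.2 hx0)] at this
      exact this
    rw [h1, mul_one]
end

section
/- Let p ∈ (1,2), q = p/(p−1), N ∈ ℕ, and let x, y ∈ ℝ^N with ‖x‖_p ≤ n^(1/p) and ‖y‖_p ≤ 1 for some n ∈ ℕ. Then min(‖x + y‖_p, ‖x − y‖_p) ≤ (n + 1)^(1/p). -/
open NNReal in
lemma clarkson_easy_nnreal (p : ℝ) (hp1 : 1 ≤ p) (hp2 : p ≤ 2) (s t : ℝ≥0) :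
    s ^ p + t ^ p ≤ 2 ^ ((1 : ℝ) - p / 2) * (s ^ (2 : ℝ) + t ^ (2 : ℝ)) ^ (p / 2) := by
  have hp0 : (0 : ℝ) < p := lt_of_lt_of_le one_pos hp1
  have h2p : 1 ≤ 2 / p := (one_le_div hp0).2 hp2
  have h := NNReal.rpow_add_le_mul_rpow_add_rpow (s ^ p) (t ^ p) h2p
  have hsp : (s ^ p) ^ (2 / p) = s ^ (2 : ℝ) := by
    rw [← NNReal.rpow_mul]; congr 1; field_simp
  have htp : (t ^ p) ^ (2 / p) = t ^ (2 : ℝ) := by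
    rw [← NNReal.rpow_mul]; congr 1; field_simp
  rw [hsp, htp] at h
  have h' := NNReal.rpow_le_rpow h (le_of_lt (by positivity : (0 : ℝ) < p / 2))
  rw [← NNReal.rpow_mul] at h'
  have he : 2 / p * (p / 2) = 1 := by field_simp
  rw [he, NNReal.rpow_one, NNReal.mul_rpow, ← NNReal.rpow_mul] at h'
  have he2 : (2 / p - 1) * (p / 2) = 1 - p / 2 := by field_simp
  rwa [he2] at h'

open NNReal in
lemma clarkson_easy_pt (p : ℝ) (hp1 : 1 ≤ p) (hp2 : p ≤ 2) (a b : ℝ) :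
    |a + b| ^ p + |a - b| ^ p ≤ 2 * (|a| ^ p + |b| ^ p) := by
  have hp0 : (0 : ℝ) < p := lt_of_lt_of_le one_pos hp1
  -- pass to NNReal
  set s : ℝ≥0 := Real.nnabs (a + b)
  set t : ℝ≥0 := Real.nnabs (a - b)
  set c : ℝ≥0 := Real.nnabs a
  set d : ℝ≥0 := Real.nnabs b
  have hsq : s ^ (2 : ℝ) + t ^ (2 : ℝ) = 2 * (c ^ (2 : ℝ) + d ^ (2 : ℝ)) := by
    have : ((s ^ (2 : ℝ) + t ^ (2 : ℝ) : ℝ≥0) : ℝ)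
        = ((2 * (c ^ (2 : ℝ) + d ^ (2 : ℝ)) : ℝ≥0) : ℝ) := by
      push_cast [NNReal.coe_rpow]
      simp only [s, t, c, d, Real.coe_nnabs]
      rw [Real.rpow_two, Real.rpow_two, Real.rpow_two, Real.rpow_two,
        sq_abs, sq_abs, sq_abs, sq_abs]
      ring
    exact_mod_cast this
  have key : s ^ p + t ^ p ≤ 2 * (c ^ p + d ^ p) := by
    calc s ^ p + t ^ p
        ≤ 2 ^ ((1 : ℝ) - p / 2) * (s ^ (2 : ℝ) + t ^ (2 : ℝ)) ^ (p / 2) :=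
          clarkson_easy_nnreal p hp1 hp2 s t
      _ = 2 ^ ((1 : ℝ) - p / 2) * (2 * (c ^ (2 : ℝ) + d ^ (2 : ℝ))) ^ (p / 2) := by rw [hsq]
      _ = 2 ^ ((1 : ℝ) - p / 2) * (2 : ℝ≥0) ^ (p / 2) * (c ^ (2 : ℝ) + d ^ (2 : ℝ)) ^ (p / 2) := by
          rw [NNReal.mul_rpow]
          · ring
      _ = 2 * (c ^ (2 : ℝ) + d ^ (2 : ℝ)) ^ (p / 2) := by
          rw [← NNReal.rpow_add two_ne_zero]
          norm_num
      _ ≤ 2 * ((c ^ (2 : ℝ)) ^ (p / 2) + (d ^ (2 : ℝ)) ^ (p / 2)) := by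
          gcongr
          exact NNReal.rpow_add_le_add_rpow _ _ (by positivity) (by linarith)
      _ = 2 * (c ^ p + d ^ p) := by
          have h2 : 2 * (p / 2) = p := by ring
          rw [← NNReal.rpow_mul, ← NNReal.rpow_mul, h2]
  have := NNReal.coe_le_coe.2 key
  push_cast [NNReal.coe_rpow] at this
  simpa only [s, t, c, d, Real.coe_nnabs] using this

theorem stmt_16 (p : ℝ) (hp : 1 < p) (hp2 : p < 2) (q : ℝ) (hq : q = p / (p - 1))
    (N : ℕ) (n : ℕ) (x y : Fin N → ℝ)
    (hx : pnorm p x ≤ (n : ℝ) ^ (1 / p)) (hy : pnorm p y ≤ 1) :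
    min (pnorm p (x + y)) (pnorm p (x - y)) ≤ ((n : ℝ) + 1) ^ (1 / p) := by
  have hp0 : (0 : ℝ) < p := lt_trans one_pos hp
  set Sp : ℝ := ∑ i, |(x + y) i| ^ p with hSp
  set Sm : ℝ := ∑ i, |(x - y) i| ^ p with hSm
  set Sx : ℝ := ∑ i, |x i| ^ p with hSx
  set Sy : ℝ := ∑ i, |y i| ^ p with hSy
  have hSx0 : 0 ≤ Sx := Finset.sum_nonneg fun i _ => by positivity
  have hSy0 : 0 ≤ Sy := Finset.sum_nonneg fun i _ => by positivity
  have hSp0 : 0 ≤ Sp := Finset.sum_nonneg fun i _ => by positivity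
  have hSm0 : 0 ≤ Sm := Finset.sum_nonneg fun i _ => by positivity
  -- from hx : Sx ≤ n
  have hxn : Sx ≤ (n : ℝ) := by
    have hx' : Sx ^ (1 / p) ≤ (n : ℝ) ^ (1 / p) := by simpa [pnorm, ← hSx] using hx
    have h := Real.rpow_le_rpow (Real.rpow_nonneg hSx0 _) hx' (le_of_lt hp0)
    rw [← Real.rpow_mul hSx0, ← Real.rpow_mul (Nat.cast_nonneg n),
      one_div_mul_cancel (ne_of_gt hp0), Real.rpow_one, Real.rpow_one] at h
    exact h
  have hy1 : Sy ≤ 1 := by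
    have hy' : Sy ^ (1 / p) ≤ 1 := by simpa [pnorm, ← hSy] using hy
    have h := Real.rpow_le_rpow (Real.rpow_nonneg hSy0 _) hy' (le_of_lt hp0)
    rw [← Real.rpow_mul hSy0, one_div_mul_cancel (ne_of_gt hp0), Real.rpow_one,
      Real.one_rpow] at h
    exact h
  have hsum : Sp + Sm ≤ 2 * ((n : ℝ) + 1) := by
    have hpt : ∀ i : Fin N, |(x + y) i| ^ p + |(x - y) i| ^ p
        ≤ 2 * (|x i| ^ p + |y i| ^ p) := fun i =>
      clarkson_easy_pt p (le_of_lt hp) (le_of_lt hp2) (x i) (y i)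
    calc Sp + Sm = ∑ i, (|(x + y) i| ^ p + |(x - y) i| ^ p) := by
          rw [hSp, hSm, ← Finset.sum_add_distrib]
      _ ≤ ∑ i, 2 * (|x i| ^ p + |y i| ^ p) := Finset.sum_le_sum fun i _ => hpt i
      _ = 2 * (Sx + Sy) := by rw [← Finset.mul_sum, Finset.sum_add_distrib]
      _ ≤ 2 * ((n : ℝ) + 1) := by nlinarith
  have hmin : min Sp Sm ≤ (n : ℝ) + 1 := by
    rcases le_total Sp Sm with h | h
    · rw [min_eq_left h]; linarith
    · rw [min_eq_right h]; linarith
  have : min (pnorm p (x + y)) (pnorm p (x - y)) = (min Sp Sm) ^ (1 / p) := by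
    unfold pnorm
    rcases le_total Sp Sm with h | h
    · rw [min_eq_left h, min_eq_left (Real.rpow_le_rpow hSp0 h (by positivity))]
    · rw [min_eq_right h, min_eq_right (Real.rpow_le_rpow hSm0 h (by positivity))]
  rw [this]
  exact Real.rpow_le_rpow (le_min hSp0 hSm0) hmin (by positivity)
end
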